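/- arXiv:2605.26865 — 2 statements merged into one kernel-verified Lean document; each statement's English description precedes it below -/
import Mathlib

section
/- Let G be a 2-connected matching-covered bipartite graph with bipartition X ⊔ Y, |X| = |Y| = n. Every lattice point of the relative interior of (n+1)·P_G has the form 1 + e_x + e_y for some x ∈ X and y ∈ Y, where 1 is the all-ones vector. -/
attribute [local instance] Classical.propDecidable
open scoped Pointwise

/-- `X ⊔ Y` is a bipartition of the graph `G`. -/
def IsBipartition {V : Type*} (G : SimpleGraph V) [Fintype V] (X Y : Finset V) : Prop :=
  Disjoint X Y ∧ X ∪ Y = Finset.univ ∧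
    ∀ x y : V, G.Adj x y → (x ∈ X ∧ y ∈ Y) ∨ (x ∈ Y ∧ y ∈ X)

/-- `G` is connected and every edge of `G` lies in a perfect matching. -/
def MatchingCovered {V : Type*} (G : SimpleGraph V) : Prop :=
  G.Connected ∧ ∀ e ∈ G.edgeSet, ∃ M : G.Subgraph, M.IsPerfectMatching ∧ e ∈ M.edgeSet

/-- `G` is connected and remains connected after deleting any single vertex. -/
def TwoConnected {V : Type*} (G : SimpleGraph V) : Prop :=
  G.Connected ∧ ∀ v : V, (G.induce {u : V | u ≠ v}).Connected

/-- The neighborhood of the vertex set `A` in `G`. -/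
noncomputable def nbhd {V : Type*} [Fintype V] (G : SimpleGraph V) (A : Finset V) : Finset V :=
  Finset.univ.filter (fun y => ∃ x ∈ A, G.Adj x y)

/-- `T` is a tight subset: `|N_G(T)| = |T| + 1`. -/
def Tight {V : Type*} [Fintype V] (G : SimpleGraph V) (T : Finset V) : Prop :=
  (nbhd G T).card = T.card + 1

/-- `T ⊆ X` is an acceptable set of the bipartite graph `G` with bipartition `X ⊔ Y`:
the graph induced by the edges between `T` and `N_G(T)` is connected, and the induced
subgraph on `(X \ T) ⊔ (Y \ N_G(T))` is connected with at least one edge. -/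
def Acceptable {V : Type*} [Fintype V] (G : SimpleGraph V) (X Y T : Finset V) : Prop :=
  T.Nonempty ∧ T ⊆ X ∧
    (G.induce (↑(T ∪ nbhd G T) : Set V)).Connected ∧
    (G.induce (↑((X \ T) ∪ (Y \ nbhd G T)) : Set V)).Connected ∧
    ∃ x ∈ X \ T, ∃ y ∈ Y \ nbhd G T, G.Adj x y

/-- The vector `e_x + e_y ∈ ℝ^V` associated with the edge `{x, y}`. -/
def edgeVec {V : Type*} [DecidableEq V] (x y : V) : V → ℝ :=
  fun v => (if v = x then (1 : ℝ) else 0) + (if v = y then (1 : ℝ) else 0)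

/-- The set of vectors `ρ(e) = e_i + e_j` for the edges `e = {i, j}` of `G`;
the edge polytope `P_G` is its convex hull. -/
def edgeVecs {V : Type*} [DecidableEq V] (G : SimpleGraph V) : Set (V → ℝ) :=
  {f | ∃ x y : V, G.Adj x y ∧ f = edgeVec x y}

/-! A lattice point `f` of the relative interior of `(n + 1) P_G` has positive coordinates:
every vertex `v` lies on an edge, so `z_v = 0` cuts out a proper face of the polytope, which
the relative interior avoids. Being integers, the coordinates are therefore `≥ 1`. Since every
edge has one end in `X` and one in `Y`, the coordinates of `f` sum to `n + 1` over each side,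
and a side has `n` vertices; so on each side all coordinates are `1` except a single `2`. -/

open Finset Topology

lemma exists_add_smul_sub_mem_of_mem_intrinsicInterior {E : Type*} [AddCommGroup E]
    [Module ℝ E] [TopologicalSpace E] [IsTopologicalAddGroup E] [ContinuousSMul ℝ E]
    {s : Set E} {x y : E} (hx : x ∈ intrinsicInterior ℝ s) (hy : y ∈ s) :
    ∃ ε : ℝ, 0 < ε ∧ x + ε • (x - y) ∈ s := by
  obtain ⟨x', hx', rfl⟩ := mem_intrinsicInterior.1 hx
  have hline : ∀ t : ℝ, t • ((x' : E) - y) + y ∈ affineSpan ℝ s := fun t => by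
    simpa [vsub_eq_sub, vadd_eq_add] using
      AffineSubspace.smul_vsub_vadd_mem _ t x'.2 (subset_affineSpan ℝ s hy)
      (subset_affineSpan ℝ s hy)
  let φ : ℝ → affineSpan ℝ s := fun t => ⟨t • ((x' : E) - y) + y, hline t⟩
  have hφ : Continuous φ :=
    ((continuous_id.smul continuous_const).add continuous_const).subtype_mk _
  have hφ1 : φ 1 = x' := Subtype.ext (by simp [φ])
  have hnear : ∀ᶠ t in 𝓝 (1 : ℝ), φ t ∈ interior (((↑) : affineSpan ℝ s → E) ⁻¹' s) :=
    hφ.continuousAt.preimage_mem_nhds (hφ1 ▸ isOpen_interior.mem_nhds hx')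
  have hright : Set.Ioi (1 : ℝ) ∈ 𝓝[>] 1 := self_mem_nhdsWithin
  obtain ⟨t, ht, ht1⟩ := ((hnear.filter_mono nhdsWithin_le_nhds).and hright).exists
  refine ⟨t - 1, sub_pos.2 ht1, ?_⟩
  have hφt : ((x' : E) + (t - 1) • ((x' : E) - y)) = φ t := by
    simp only [φ, sub_smul, one_smul]
    abel
  exact hφt ▸ (interior_subset ht : φ t ∈ ((↑) : affineSpan ℝ s → E) ⁻¹' s)

lemma pos_of_mem_intrinsicInterior {ι : Type*} {s : Set (ι → ℝ)} (hs : ∀ g ∈ s, 0 ≤ g)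
    {f y : ι → ℝ} (hf : f ∈ intrinsicInterior ℝ s) (hy : y ∈ s) {i : ι} (hyi : 0 < y i) :
    0 < f i := by
  obtain ⟨ε, hε, hmem⟩ := exists_add_smul_sub_mem_of_mem_intrinsicInterior hf hy
  have hfi : 0 ≤ f i := hs f (intrinsicInterior_subset hf) i
  have hbeyond : 0 ≤ f i + ε * (f i - y i) := hs _ hmem i
  nlinarith

lemma Int.exists_eq_one_add_ite_of_sum_eq_card_add_one {ι : Type*} [DecidableEq ι] {s : Finset ι}
    {k : ι → ℤ} (hk : ∀ i ∈ s, 0 < k i) (hsum : ∑ i ∈ s, k i = #s + 1) :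
    ∃ x ∈ s, ∀ i ∈ s, k i = 1 + if i = x then 1 else 0 := by
  have hexcess : ∑ i ∈ s, (k i - 1) = 1 := by
    rw [sum_sub_distrib, hsum]
    simp
  obtain ⟨x, hx, hkx⟩ : ∃ x ∈ s, k x - 1 ≠ 0 := by
    by_contra! h
    rw [sum_eq_zero h] at hexcess
    exact zero_ne_one hexcess
  have hrest_nonneg : ∀ i ∈ s.erase x, 0 ≤ k i - 1 := fun i hi => by
    linarith [hk i (mem_of_mem_erase hi)]
  have hsplit := add_sum_erase s (fun i => k i - 1) hx
  have hrest : ∑ i ∈ s.erase x, (k i - 1) = 0 := by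
    have := sum_nonneg hrest_nonneg
    have := hk x hx
    omega
  refine ⟨x, hx, fun i hi => ?_⟩
  split_ifs with hix
  · subst hix
    omega
  · have := (sum_eq_zero_iff_of_nonneg hrest_nonneg).1 hrest i (mem_erase.2 ⟨hix, hi⟩)
    omega

lemma Real.exists_eq_one_add_ite_of_sum_eq_card_add_one {ι : Type*} [DecidableEq ι]
    {s : Finset ι} {f : ι → ℝ} (hint : ∀ i, ∃ k : ℤ, f i = k) (hpos : ∀ i ∈ s, 0 < f i)
    (hsum : ∑ i ∈ s, f i = #s + 1) :
    ∃ x ∈ s, ∀ i ∈ s, f i = 1 + if i = x then 1 else 0 := by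
  choose k hk using hint
  simp only [hk] at hpos hsum ⊢
  obtain ⟨x, hx, hkx⟩ := Int.exists_eq_one_add_ite_of_sum_eq_card_add_one
    (fun i hi => Int.cast_pos.1 (hpos i hi)) (by exact_mod_cast hsum)
  exact ⟨x, hx, fun i hi => by rw [hkx i hi]; split_ifs <;> norm_num⟩

section EdgePolytope

variable {V : Type*} [DecidableEq V] {G : SimpleGraph V}

lemma sum_edgeVec (s : Finset V) (x y : V) :
    ∑ u ∈ s, edgeVec x y u = (if x ∈ s then 1 else 0) + (if y ∈ s then 1 else 0) := by
  simp only [edgeVec, sum_add_distrib, sum_ite_eq']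

lemma nonneg_of_mem_convexHull_edgeVecs {g : V → ℝ} (hg : g ∈ convexHull ℝ (edgeVecs G)) :
    0 ≤ g := by
  refine convexHull_min ?_ (convex_Ici 0) hg
  rintro _ ⟨x, y, -, rfl⟩ v
  unfold edgeVec
  positivity

lemma sum_eq_one_of_mem_convexHull_edgeVecs {s : Finset V}
    (hs : ∀ ⦃x y⦄, G.Adj x y → (x ∈ s ↔ y ∉ s)) {g : V → ℝ}
    (hg : g ∈ convexHull ℝ (edgeVecs G)) : ∑ u ∈ s, g u = 1 := by
  have hlin : IsLinearMap ℝ fun g : V → ℝ => ∑ u ∈ s, g u :=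
    ⟨fun _ _ => sum_add_distrib, fun _ _ => (mul_sum _ _ _).symm⟩
  refine convexHull_min ?_ (convex_hyperplane hlin 1) hg
  rintro _ ⟨x, y, hxy, rfl⟩
  by_cases hy : y ∈ s <;> simp [sum_edgeVec, hs hxy, hy]

lemma nonneg_of_mem_smul_convexHull_edgeVecs {c : ℝ} (hc : 0 ≤ c) {f : V → ℝ}
    (hf : f ∈ c • convexHull ℝ (edgeVecs G)) : 0 ≤ f := by
  obtain ⟨g, hg, rfl⟩ := hf
  exact smul_nonneg hc (nonneg_of_mem_convexHull_edgeVecs hg)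

lemma sum_eq_of_mem_smul_convexHull_edgeVecs {s : Finset V}
    (hs : ∀ ⦃x y⦄, G.Adj x y → (x ∈ s ↔ y ∉ s)) {c : ℝ} {f : V → ℝ}
    (hf : f ∈ c • convexHull ℝ (edgeVecs G)) : ∑ u ∈ s, f u = c := by
  obtain ⟨g, hg, rfl⟩ := hf
  simp [← mul_sum, sum_eq_one_of_mem_convexHull_edgeVecs hs hg]

lemma pos_of_mem_intrinsicInterior_smul_convexHull_edgeVecs (hG : G.Connected) {c : ℝ}
    (hc : 0 < c) {f : V → ℝ} (hf : f ∈ intrinsicInterior ℝ (c • convexHull ℝ (edgeVecs G)))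
    (v : V) : 0 < f v := by
  obtain ⟨g, hg, -⟩ := intrinsicInterior_subset hf
  obtain ⟨_, a, b, hab, -⟩ := convexHull_nonempty_iff.1 ⟨g, hg⟩
  have : Nontrivial V := nontrivial_of_ne a b hab.ne
  obtain ⟨u, hvu⟩ := hG.preconnected.exists_adj_of_nontrivial v
  refine pos_of_mem_intrinsicInterior (fun _ => nonneg_of_mem_smul_convexHull_edgeVecs hc.le) hf
    (Set.smul_mem_smul_set (subset_convexHull ℝ _ ⟨v, u, hvu, rfl⟩)) (i := v) ?_
  simp [edgeVec, hvu.ne, hc]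

end EdgePolytope

namespace IsBipartition

variable {V : Type*} [Fintype V] {G : SimpleGraph V} {X Y : Finset V}

lemma symm (h : IsBipartition G X Y) : IsBipartition G Y X :=
  ⟨h.1.symm, union_comm X Y ▸ h.2.1, fun x y hxy => (h.2.2 x y hxy).symm⟩

lemma mem_left_iff (h : IsBipartition G X Y) ⦃x y : V⦄ (hxy : G.Adj x y) : x ∈ X ↔ y ∉ X := by
  rcases h.2.2 x y hxy with ⟨hx, hy⟩ | ⟨hx, hy⟩
  · exact iff_of_true hx (disjoint_right.1 h.1 hy)
  · exact iff_of_false (disjoint_right.1 h.1 hx) (not_not.2 hy)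

lemma mem_or_mem (h : IsBipartition G X Y) (v : V) : v ∈ X ∨ v ∈ Y :=
  mem_union.1 (eq_univ_iff_forall.1 h.2.1 v)

lemma eq_one_add_edgeVec [DecidableEq V] (h : IsBipartition G X Y) {x y : V} (hx : x ∈ X)
    (hy : y ∈ Y) {f : V → ℝ} (hfX : ∀ v ∈ X, f v = 1 + if v = x then 1 else 0)
    (hfY : ∀ v ∈ Y, f v = 1 + if v = y then 1 else 0) : f = 1 + edgeVec x y := by
  funext v
  rcases h.mem_or_mem v with hvX | hvY
  · have hvy : v ≠ y := fun hvy => disjoint_left.1 h.1 hvX (hvy ▸ hy)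
    simp [hfX v hvX, edgeVec, hvy]
  · have hvx : v ≠ x := fun hvx => disjoint_left.1 h.1 (hvx ▸ hx) hvY
    simp [hfY v hvY, edgeVec, hvx]

end IsBipartition

theorem stmt5_general {V : Type*} [Fintype V] [DecidableEq V] (G : SimpleGraph V)
    (X Y : Finset V) (n : ℕ)
    (hbip : IsBipartition G X Y) (hX : X.card = n) (hY : Y.card = n)
    (hmc : MatchingCovered G) :
    ∀ f : V → ℝ,
      f ∈ intrinsicInterior ℝ (((n : ℝ) + 1) • convexHull ℝ (edgeVecs G)) →
      (∀ v : V, ∃ k : ℤ, f v = (k : ℝ)) →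
      ∃ x ∈ X, ∃ y ∈ Y, f = (1 : V → ℝ) + edgeVec x y := by
  intro f hf hint
  have hpos : ∀ v, 0 < f v :=
    pos_of_mem_intrinsicInterior_smul_convexHull_edgeVecs hmc.1 (by positivity) hf
  have hmem := intrinsicInterior_subset hf
  obtain ⟨x, hx, hfX⟩ := Real.exists_eq_one_add_ite_of_sum_eq_card_add_one hint
    (fun v _ => hpos v) (by rw [sum_eq_of_mem_smul_convexHull_edgeVecs hbip.mem_left_iff hmem, hX])
  obtain ⟨y, hy, hfY⟩ := Real.exists_eq_one_add_ite_of_sum_eq_card_add_one hint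
    (fun v _ => hpos v)
    (by rw [sum_eq_of_mem_smul_convexHull_edgeVecs hbip.symm.mem_left_iff hmem, hY])
  exact ⟨x, hx, y, hy, hbip.eq_one_add_edgeVec hx hy hfX hfY⟩

theorem stmt5 {V : Type*} [Fintype V] [DecidableEq V] (G : SimpleGraph V)
    (X Y : Finset V) (n : ℕ)
    (hbip : IsBipartition G X Y) (hX : X.card = n) (hY : Y.card = n)
    (hmc : MatchingCovered G) (h2 : TwoConnected G)
    (hone : (1 : V → ℝ) ∈ intrinsicInterior ℝ ((n : ℝ) • convexHull ℝ (edgeVecs G))) :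
    ∀ f : V → ℝ,
      f ∈ intrinsicInterior ℝ (((n : ℝ) + 1) • convexHull ℝ (edgeVecs G)) →
      (∀ v : V, ∃ k : ℤ, f v = (k : ℝ)) →
      ∃ x ∈ X, ∃ y ∈ Y, f = (1 : V → ℝ) + edgeVec x y :=
  stmt5_general G X Y n hbip hX hY hmc
end

section
/- Let G be a bipartite graph with bipartition X ⊔ Y satisfying the strict Hall property (every non-empty proper A ⊊ X has |N_G(A)| ≥ |A|+1, and symmetrically for Y) with |X| = |Y|. Let T ⊆ X be a non-empty proper subset with |N_G(T)| = |T| + 1, and set D = N_G(T). If the bipartite graph induced by the edges between T and D has r connected components with X-parts T_1, ..., T_r (each a non-empty proper subset of X), then r = 1; i.e., the graph induced by the edges between T and N_G(T) is connected. -/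
attribute [local instance] Classical.propDecidable

/-!
Every vertex of `N(T)` has a neighbour in `T`, so each component of the graph induced on
`T ∪ N(T)` meets `T`. A disconnection therefore splits `T` into non-empty parts `T₁`, `T₂` in
different components, whose neighbourhoods are disjoint and cover `N(T)`. Strict Hall gives
`|N(Tᵢ)| ≥ |Tᵢ| + 1`, hence `|N(T)| ≥ |T| + 2`, contradicting `|N(T)| = |T| + 1`.
-/

namespace SimpleGraph

variable {V : Type*} (G : SimpleGraph V)

theorem reachable_induce_of_adj {s : Set V} {u v : V} (hu : u ∈ s) (hv : v ∈ s) (h : G.Adj u v) :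
    (G.induce s).Reachable ⟨u, hu⟩ ⟨v, hv⟩ :=
  Adj.reachable h

variable [Fintype V]

theorem mem_nbhd {A : Finset V} {y : V} : y ∈ nbhd G A ↔ ∃ x ∈ A, G.Adj x y := by
  simp [nbhd]

theorem nbhd_union (A B : Finset V) : nbhd G (A ∪ B) = nbhd G A ∪ nbhd G B := by
  ext y
  simp only [mem_nbhd, Finset.mem_union, or_and_right, exists_or]

theorem exists_reachable_mem_of_mem_union_nbhd {T : Finset V}
    (v : ↥(↑(T ∪ nbhd G T) : Set V)) :
    ∃ t, ∃ ht : t ∈ T, (G.induce (↑(T ∪ nbhd G T) : Set V)).Reachable v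
      ⟨t, Finset.mem_union_left _ ht⟩ := by
  obtain ⟨v, hv⟩ := v
  rcases Finset.mem_union.mp hv with hvT | hvN
  · exact ⟨v, hvT, .rfl⟩
  · obtain ⟨t, ht, htv⟩ := G.mem_nbhd.mp hvN
    exact ⟨t, ht, G.reachable_induce_of_adj _ _ htv.symm⟩

theorem exists_partition_disjoint_nbhd_of_not_connected {T : Finset V} (hT : T.Nonempty)
    (h : ¬(G.induce (↑(T ∪ nbhd G T) : Set V)).Connected) :
    ∃ T₁ T₂ : Finset V, Disjoint T₁ T₂ ∧ T₁ ∪ T₂ = T ∧ T₁.Nonempty ∧ T₂.Nonempty ∧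
      Disjoint (nbhd G T₁) (nbhd G T₂) := by
  set S : Set V := ↑(T ∪ nbhd G T)
  set H := G.induce S
  obtain ⟨t₀, ht₀⟩ := hT
  have : Nonempty S := ⟨⟨t₀, Finset.mem_union_left _ ht₀⟩⟩
  obtain ⟨a, b, hab⟩ : ∃ a b : S, ¬H.Reachable a b := by
    simpa [connected_iff, Preconnected, this] using h
  let p : V → Prop := fun v => ∃ hv : v ∈ S, H.Reachable a ⟨v, hv⟩
  have p_of_adj {u v : V} (hu : u ∈ S) (hv : v ∈ S) (huv : G.Adj u v) : p u → p v :=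
    fun ⟨_, hau⟩ => ⟨hv, hau.trans (G.reachable_induce_of_adj hu hv huv)⟩
  refine ⟨T.filter p, T.filter (¬p ·), Finset.disjoint_filter_filter_not _ _ _,
    Finset.filter_union_filter_not_eq _ _, ?_, ?_, ?_⟩
  · obtain ⟨t, ht, hat⟩ := G.exists_reachable_mem_of_mem_union_nbhd a
    exact ⟨t, Finset.mem_filter.mpr ⟨ht, _, hat⟩⟩
  · obtain ⟨t, ht, hbt⟩ := G.exists_reachable_mem_of_mem_union_nbhd b
    exact ⟨t, Finset.mem_filter.mpr ⟨ht, fun ⟨_, hat⟩ => hab (hat.trans hbt.symm)⟩⟩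
  · rw [Finset.disjoint_left]
    intro d hd₁ hd₂
    obtain ⟨t₁, ht₁, ht₁d⟩ := G.mem_nbhd.mp hd₁
    obtain ⟨t₂, ht₂, ht₂d⟩ := G.mem_nbhd.mp hd₂
    rw [Finset.mem_filter] at ht₁ ht₂
    have hdS : d ∈ S := Finset.mem_union_right _ (G.mem_nbhd.mpr ⟨t₁, ht₁.1, ht₁d⟩)
    have mem_S {t} (ht : t ∈ T) : t ∈ S := Finset.mem_union_left _ ht
    exact ht₂.2 (p_of_adj hdS (mem_S ht₂.1) ht₂d.symm (p_of_adj (mem_S ht₁.1) hdS ht₁d ht₁.2))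

end SimpleGraph

theorem stmt17_general {V : Type*} [Fintype V] (G : SimpleGraph V) (X : Finset V)
    (hallX : ∀ A : Finset V, A ⊆ X → A.Nonempty → A ≠ X → A.card + 1 ≤ (nbhd G A).card)
    (T : Finset V) (hTX : T ⊆ X) (hTne : T.Nonempty) (hTpr : T ≠ X)
    (hTt : Tight G T) :
    (G.induce (↑(T ∪ nbhd G T) : Set V)).Connected := by
  by_contra hdisc
  obtain ⟨T₁, T₂, hdisj, rfl, hT₁, hT₂, hN⟩ :=
    G.exists_partition_disjoint_nbhd_of_not_connected hTne hdisc
  have hall {A} (hA : A ⊆ T₁ ∪ T₂) (hAne : A.Nonempty) : A.card + 1 ≤ (nbhd G A).card :=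
    hallX A (hA.trans hTX) hAne fun hAX => hTpr (hTX.antisymm (hAX ▸ hA))
  have h₁ := hall Finset.subset_union_left hT₁
  have h₂ := hall Finset.subset_union_right hT₂
  have : (nbhd G (T₁ ∪ T₂)).card = (nbhd G T₁).card + (nbhd G T₂).card := by
    rw [G.nbhd_union, Finset.card_union_of_disjoint hN]
  unfold Tight at hTt
  rw [Finset.card_union_of_disjoint hdisj] at hTt
  omega

theorem stmt17 {V : Type*} [Fintype V] (G : SimpleGraph V) (X Y : Finset V)
    (hbip : IsBipartition G X Y) (hcard : X.card = Y.card)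
    (hallX : ∀ A : Finset V, A ⊆ X → A.Nonempty → A ≠ X → A.card + 1 ≤ (nbhd G A).card)
    (hallY : ∀ B : Finset V, B ⊆ Y → B.Nonempty → B ≠ Y → B.card + 1 ≤ (nbhd G B).card)
    (T : Finset V) (hTX : T ⊆ X) (hTne : T.Nonempty) (hTpr : T ≠ X)
    (hTt : Tight G T) :
    (G.induce (↑(T ∪ nbhd G T) : Set V)).Connected :=
  stmt17_general G X hallX T hTX hTne hTpr hTt
end
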